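/- arXiv:math/0506348 — 5 statements merged into one kernel-verified Lean document; each statement's English description precedes it below -/
import Mathlib

section
/- Let X be a scheme of finite type over an algebraically closed field of characteristic p > 0 that is Frobenius split, compatibly with closed subschemes Y₁ and Y₂ (both with respect to the same splitting s). Then the scheme-theoretic intersection Y₁ ∩ Y₂ is also compatibly split by s; in particular Y₁ ∩ Y₂ is reduced. -/
open AlgebraicGeometry CategoryTheory Opposite

/-- An ideal sheaf on a scheme `X`, given section-wise: an ideal of `Γ(X, U)`
for every open `U`, compatible with restriction.  It defines a closed subscheme
`Y` of `X`. -/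
structure SchemeIdealSheaf (X : AlgebraicGeometry.Scheme) where
  ideal : ∀ U : X.Opens, Ideal Γ(X, U)
  map_mem : ∀ {U V : X.Opens} (h : V ≤ U), ∀ a ∈ ideal U,
    X.presheaf.map (homOfLE h).op a ∈ ideal V

/-- A Frobenius splitting of a scheme `X` of characteristic `p`, given
section-wise: an additive map `s U : Γ(X, U) → Γ(X, U)` for every open `U`,
compatible with restriction, which is `O_X`-linear for the Frobenius
(`s(aᵖ b) = a s(b)`) and splits the `p`-th power map `F^♯` (`s(aᵖ) = a`).
This encodes an `O_X`-linear map `s : F_* O_X → O_X` with `s ∘ F^♯ = id`. -/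
structure SchemeFrobSplitting (X : AlgebraicGeometry.Scheme) (p : ℕ) where
  s : ∀ U : X.Opens, Γ(X, U) → Γ(X, U)
  map_add : ∀ (U : X.Opens) (a b : Γ(X, U)), s U (a + b) = s U a + s U b
  semilinear : ∀ (U : X.Opens) (a b : Γ(X, U)), s U (a ^ p * b) = a * s U b
  splits : ∀ (U : X.Opens) (a : Γ(X, U)), s U (a ^ p) = a
  res : ∀ {U V : X.Opens} (h : V ≤ U) (a : Γ(X, U)),
    X.presheaf.map (homOfLE h).op (s U a) = s V (X.presheaf.map (homOfLE h).op a)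

theorem Ideal.isRadical_of_mapsTo_of_splits_pow {R : Type*} [CommSemiring R] {p : ℕ}
    (hp : 1 < p) {s : R → R} (hs : ∀ a, s (a ^ p) = a) {I : Ideal R}
    (hI : Set.MapsTo s I I) : I.IsRadical :=
  (Ideal.isRadical_iff_pow_one_lt p hp).mpr fun a ha => hs a ▸ hI ha

theorem Submodule.mapsTo_sup_of_map_add {R M : Type*} [Semiring R] [AddCommMonoid M]
    [Module R M] {s : M → M} (hs : ∀ a b, s (a + b) = s a + s b) {N₁ N₂ : Submodule R M}
    (h₁ : Set.MapsTo s N₁ N₁) (h₂ : Set.MapsTo s N₂ N₂) :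
    Set.MapsTo s ↑(N₁ ⊔ N₂) ↑(N₁ ⊔ N₂) := by
  intro a ha
  obtain ⟨b, hb, c, hc, rfl⟩ := Submodule.mem_sup.mp ha
  rw [hs]
  exact Submodule.add_mem_sup (h₁ hb) (h₂ hc)

theorem stmt_1_general (p : ℕ) (hp : p.Prime)
    (X : AlgebraicGeometry.Scheme)
    (s : SchemeFrobSplitting X p) (I₁ I₂ : SchemeIdealSheaf X)
    (hcompat₁ : ∀ (U : X.Opens), ∀ a ∈ I₁.ideal U, s.s U a ∈ I₁.ideal U)
    (hcompat₂ : ∀ (U : X.Opens), ∀ a ∈ I₂.ideal U, s.s U a ∈ I₂.ideal U) :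
    (∀ (U : X.Opens), ∀ a ∈ I₁.ideal U ⊔ I₂.ideal U,
        s.s U a ∈ I₁.ideal U ⊔ I₂.ideal U) ∧
    ∀ U : X.Opens, (I₁.ideal U ⊔ I₂.ideal U : Ideal Γ(X, U)).IsRadical := by
  have hsup (U : X.Opens) :
      Set.MapsTo (s.s U) (I₁.ideal U ⊔ I₂.ideal U : Ideal Γ(X, U))
        (I₁.ideal U ⊔ I₂.ideal U : Ideal Γ(X, U)) :=
    Submodule.mapsTo_sup_of_map_add (s.map_add U) (hcompat₁ U) (hcompat₂ U)
  exact ⟨fun U _ ha => hsup U ha, fun U =>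
    Ideal.isRadical_of_mapsTo_of_splits_pow hp.one_lt (s.splits U) (hsup U)⟩

/-- Let `X` be a scheme of finite type over an algebraically
closed field of characteristic `p > 0` which is Frobenius split, compatibly
with closed subschemes `Y₁` and `Y₂` (with respect to the same splitting `s`).
Then the scheme-theoretic intersection `Y₁ ∩ Y₂` — the closed subscheme with
ideal sheaf `I_{Y₁} + I_{Y₂}` — is also compatibly split by `s`; in particular
`Y₁ ∩ Y₂` is reduced (its ideal sheaf is radical). -/
theorem stmt_1 (k : Type) [Field k] [IsAlgClosed k] (p : ℕ) (hp : p.Prime)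
    [CharP k p] (X : AlgebraicGeometry.Scheme)
    (f : X ⟶ AlgebraicGeometry.Spec (CommRingCat.of k)) [LocallyOfFiniteType f]
    [QuasiCompact f]
    (s : SchemeFrobSplitting X p) (I₁ I₂ : SchemeIdealSheaf X)
    (hcompat₁ : ∀ (U : X.Opens), ∀ a ∈ I₁.ideal U, s.s U a ∈ I₁.ideal U)
    (hcompat₂ : ∀ (U : X.Opens), ∀ a ∈ I₂.ideal U, s.s U a ∈ I₂.ideal U) :
    (∀ (U : X.Opens), ∀ a ∈ I₁.ideal U ⊔ I₂.ideal U,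
        s.s U a ∈ I₁.ideal U ⊔ I₂.ideal U) ∧
    ∀ U : X.Opens, (I₁.ideal U ⊔ I₂.ideal U : Ideal Γ(X, U)).IsRadical :=
  stmt_1_general p hp X s I₁ I₂ hcompat₁ hcompat₂
end

section
/- Let A be a local ring of characteristic p > 0 (the local ring of a smooth affine variety at a point x), and let f₁, …, f_N ∈ A. Suppose there exists an additive map τ : A → A satisfying τ(a^p · (f₁⋯f_N)^{p-1}) = a for all a ∈ A (a Frobenius splitting along the section ∏ f_i^{p-1}). Then for any sequence of pairwise distinct indices i₁, …, i_r such that x lies in the common zero set of f_{i₁}, …, f_{i_r}, the elements f_{i₁}, …, f_{i_r} form a regular sequence in A. -/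
open Finset


section Aux

variable {A : Type*} [CommRing A]

lemma aux_tau_zero (τ : A → A) (hadd : ∀ a b : A, τ (a + b) = τ a + τ b) : τ 0 = 0 := by
  have h : τ 0 = τ 0 + τ 0 := by simpa using (hadd 0 0).symm
  exact add_right_cancel (h.symm.trans (zero_add (τ 0)).symm)

lemma aux_tau_sum {β : Type*} (τ : A → A) (hadd : ∀ a b : A, τ (a + b) = τ a + τ b)
    (t : Finset β) (q : β → A) :
    τ (∑ y ∈ t, q y) = ∑ y ∈ t, τ (q y) := by
  classical
  induction t using Finset.induction_on with
  | empty => simpa using aux_tau_zero τ hadd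
  | insert _ _ h ih => rw [Finset.sum_insert h, Finset.sum_insert h, hadd, ih]

lemma aux_step {N : ℕ} (f : Fin N → A) (s : Finset (Fin N)) (m : ℕ) (z : A)
    (hz : z ∈ Ideal.span ((fun j => f j ^ m) '' ↑s)) :
    z * ∏ j ∈ s, f j ∈ Ideal.span ((fun j => f j ^ (m + 1)) '' ↑s) := by
  refine Submodule.span_induction (fun y hy => ?_) (by simp)
    (fun a b _ _ ha hb => by rw [add_mul]; exact Ideal.add_mem _ ha hb)
    (fun c a _ ha => by rw [smul_eq_mul, mul_assoc]; exact Ideal.mul_mem_left _ _ ha) hz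
  obtain ⟨j, hj, rfl⟩ := hy
  rw [← Finset.mul_prod_erase s f hj, ← mul_assoc, ← pow_succ]
  exact Ideal.mul_mem_right _ _ (Ideal.subset_span ⟨j, hj, rfl⟩)

lemma aux_pow {N : ℕ} (f : Fin N → A) (s : Finset (Fin N)) (w : A)
    (hw : w ∈ Ideal.span (f '' ↑s)) :
    ∀ m, 1 ≤ m → w ^ m * (∏ j ∈ s, f j) ^ m ∈ Ideal.span ((fun j => f j ^ (m + 1)) '' ↑s) := by
  intro m hm
  induction m, hm using Nat.le_induction with
  | base =>
    simpa [pow_one] using aux_step f s 1 w (by simpa [pow_one] using hw)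
  | succ m hm ih =>
    have h1 : w ^ (m + 1) * (∏ j ∈ s, f j) ^ (m + 1)
        = ((w ^ m * (∏ j ∈ s, f j) ^ m) * w) * ∏ j ∈ s, f j := by ring
    rw [h1]
    exact aux_step f s (m + 1) _ (Ideal.mul_mem_right _ _ ih)

lemma aux_tau_mem {N p : ℕ} (f : Fin N → A) (τ : A → A)
    (hadd : ∀ a b : A, τ (a + b) = τ a + τ b)
    (hsemilinear : ∀ a b : A, τ (b ^ p * a) = b * τ a)
    (s : Finset (Fin N)) (z : A)
    (hz : z ∈ Ideal.span ((fun j => f j ^ p) '' ↑s)) :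
    τ z ∈ Ideal.span (f '' ↑s) := by
  classical
  rw [show ((fun j => f j ^ p) '' ↑s) = ↑(s.image fun j => f j ^ p) by
    rw [Finset.coe_image]] at hz
  obtain ⟨c, -, hc⟩ := Submodule.mem_span_finset.mp hz
  rw [← hc, aux_tau_sum τ hadd]
  refine Ideal.sum_mem _ fun y hy => ?_
  obtain ⟨j, hj, rfl⟩ := Finset.mem_image.mp hy
  rw [smul_eq_mul, mul_comm, hsemilinear]
  exact Ideal.mul_mem_right _ _ (Ideal.subset_span ⟨j, hj, rfl⟩)

end Aux

section Aux2
variable {A : Type*} [CommRing A]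

lemma aux_main {N p : ℕ} (hp : p.Prime) (f : Fin N → A) (τ : A → A)
    (hadd : ∀ a b : A, τ (a + b) = τ a + τ b)
    (hsemilinear : ∀ a b : A, τ (b ^ p * a) = b * τ a)
    (hsplit : ∀ a : A, τ (a ^ p * (∏ i, f i) ^ (p - 1)) = a)
    (s : Finset (Fin N)) (k : Fin N) (hk : k ∉ s) (c : A)
    (hc : f k * c ∈ Ideal.span (f '' ↑s)) :
    c ∈ Ideal.span (f '' ↑s) := by
  have h2le := hp.two_le
  obtain ⟨q, rfl⟩ : ∃ q, p = q + 1 := ⟨p - 1, (Nat.succ_pred_eq_of_pos hp.pos).symm⟩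
  have hq1 : 1 ≤ q := by omega
  have hF : (∏ i, f i) = f k * (∏ j ∈ s, f j) * ∏ j ∈ univ \ insert k s, f j := by
    rw [← Finset.prod_sdiff (Finset.subset_univ (insert k s)), Finset.prod_insert hk]
    ring
  have key : c ^ (q + 1) * (∏ i, f i) ^ q
      = (c * (∏ j ∈ univ \ insert k s, f j) ^ q) * ((f k * c) ^ q * (∏ j ∈ s, f j) ^ q) := by
    rw [hF]; ring
  have h2 := aux_pow f s (f k * c) hc q hq1
  have h3 : c ^ (q + 1) * (∏ i, f i) ^ q ∈ Ideal.span ((fun j => f j ^ (q + 1)) '' ↑s) := by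
    rw [key]; exact Ideal.mul_mem_left _ _ h2
  have h4 := aux_tau_mem f τ hadd hsemilinear s _ h3
  have h5 := hsplit c
  simp only [Nat.add_sub_cancel] at h5
  rwa [h5] at h4

end Aux2

/-- Let `A` be a local ring of characteristic `p > 0` (the local
ring of a smooth affine variety at a point `x`) and let `f₁, …, f_N ∈ A`.
Suppose there is an additive, Frobenius-semilinear map `τ : A → A` (i.e.
`τ(bᵖ a) = b τ(a)`) satisfying `τ(aᵖ (f₁ ⋯ f_N)^(p-1)) = a` for all `a ∈ A`,
i.e. a Frobenius splitting along the section `∏ fᵢ^(p-1)`.  Then for any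
sequence of pairwise distinct indices `i₁, …, i_r` such that `x` lies in the
common zero set of `f_{i₁}, …, f_{i_r}` (i.e. each `f_{i_j}` belongs to the
maximal ideal of `A`), the elements `f_{i₁}, …, f_{i_r}` form a regular
sequence in `A`. -/
theorem stmt_3 (p : ℕ) (hp : p.Prime) (A : Type*) [CommRing A] [IsLocalRing A]
    [CharP A p] (N : ℕ) (f : Fin N → A) (τ : A → A)
    (hadd : ∀ a b : A, τ (a + b) = τ a + τ b)
    (hsemilinear : ∀ a b : A, τ (b ^ p * a) = b * τ a)
    (hsplit : ∀ a : A, τ (a ^ p * (∏ i, f i) ^ (p - 1)) = a)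
    (r : ℕ) (ι : Fin r → Fin N) (hι : Function.Injective ι)
    (hzero : ∀ j, f (ι j) ∈ IsLocalRing.maximalIdeal A) :
    RingTheory.Sequence.IsRegular A (List.ofFn fun j => f (ι j)) := by
  classical
  haveI : Nontrivial A := CharP.nontrivial_of_char_ne_one (R := A) (v := p) hp.ne_one
  rw [IsLocalRing.isRegular_iff_isWeaklyRegular_of_subset_maximalIdeal
    (fun a ha => by rw [List.mem_ofFn] at ha; obtain ⟨j, rfl⟩ := ha; exact hzero j)]
  rw [RingTheory.Sequence.isWeaklyRegular_iff]
  intro i hi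
  have hir : i < r := by simpa using hi
  set s : Finset (Fin N) := (Finset.univ.filter fun j : Fin r => (j : ℕ) < i).image ι with hs
  have hset : {a | a ∈ (List.ofFn (fun j => f (ι j))).take i} = f '' ↑s := by
    ext a
    simp only [Set.mem_setOf_eq, List.mem_take_iff_getElem, List.getElem_ofFn,
      List.length_ofFn, hs, Finset.coe_image, Finset.coe_filter, Finset.mem_univ, true_and,
      Set.mem_image, Set.mem_setOf_eq]
    constructor
    · rintro ⟨m, hm, rfl⟩
      exact ⟨ι ⟨m, (Nat.lt_min.mp hm).2⟩, ⟨⟨m, (Nat.lt_min.mp hm).2⟩, (Nat.lt_min.mp hm).1, rfl⟩, rfl⟩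
    · rintro ⟨b, ⟨j, hj, rfl⟩, rfl⟩
      exact ⟨j.val, Nat.lt_min.mpr ⟨hj, j.isLt⟩, by simp⟩
  have hIdeal : Ideal.ofList ((List.ofFn (fun j => f (ι j))).take i) = Ideal.span (f '' ↑s) :=
    congrArg Ideal.span hset
  rw [hIdeal]
  have hel : (List.ofFn (fun j => f (ι j)))[i]'hi = f (ι ⟨i, hir⟩) := by
    simp [List.getElem_ofFn]
  rw [hel]
  have hst : (Ideal.span (f '' ↑s) • ⊤ : Submodule A A) = Ideal.span (f '' ↑s) := by simp
  intro x y hxy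
  obtain ⟨a, rfl⟩ := Submodule.Quotient.mk_surjective _ x
  obtain ⟨b, rfl⟩ := Submodule.Quotient.mk_surjective _ y
  dsimp only at hxy
  rw [← Submodule.Quotient.mk_smul, ← Submodule.Quotient.mk_smul, Submodule.Quotient.eq,
    hst] at hxy
  rw [Submodule.Quotient.eq, hst]
  have hk : ι ⟨i, hir⟩ ∉ s := by
    simp only [hs, Finset.mem_image, Finset.mem_filter, Finset.mem_univ, true_and]
    rintro ⟨j, hj, hjeq⟩
    have := hι hjeq
    subst this
    exact absurd hj (by simp)
  have hc : f (ι ⟨i, hir⟩) * (a - b) ∈ Ideal.span (f '' ↑s) := by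
    rw [mul_sub]; simpa [smul_eq_mul] using hxy
  exact aux_main hp f τ hadd hsemilinear hsplit s _ hk (a - b) hc
end

section
/- Let X be a scheme with effective Cartier divisors D₁ and D₂, and suppose s₁ (resp. s₂) is a stable Frobenius splitting of X along D₁ (resp. D₂) of degree e₁ (resp. e₂), each compatibly splitting a closed subscheme Y. Then there exists a stable Frobenius splitting of X along D₁ + D₂ of degree e₁ + e₂ which compatibly splits Y. -/
/-!
Composing splittings: twist `s₂` by `O(D₁)` to get a map
`F^{e₂}_* O(D₂ + p^{e₂} D₁) → O(D₁)`, then follow it by `F^{e₁}_* s₁`. The canonical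
section `σ_{D₁} σ_{D₂}` goes to `σ_{D₁}` and then to `1`, and each factor preserves
the ideal of `Y`. Since `Y` has no component inside `D₁` or `D₂`, its minimal primes
avoid `d₁` and `d₂`, hence their product.
-/

namespace FrobeniusSplitting

variable {R : Type*} [CommRing R]

/-- Affine form of `s₁ ∘ F^{e₁}_*(s₂ ⊗ O(D₁))` for `q₂ = p^{e₂}`: trivializing
`O(D₂ + q₂ D₁)` and `O(D₁)` by `d₂ d₁^{q₂}` and `d₁`, the twist of `s₂` by `O(D₁)`
becomes `a ↦ s₂ (d₁^{q₂-1} a)`. -/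
def twistedComp (q₂ : ℕ) (d₁ : R) (s₁ s₂ : R → R) : R → R :=
  fun a => s₁ (s₂ (d₁ ^ (q₂ - 1) * a))

variable {q₁ q₂ : ℕ} {d₁ : R} {s₁ s₂ : R → R}

theorem twistedComp_add (hadd₁ : ∀ a b, s₁ (a + b) = s₁ a + s₁ b)
    (hadd₂ : ∀ a b, s₂ (a + b) = s₂ a + s₂ b) (a b : R) :
    twistedComp q₂ d₁ s₁ s₂ (a + b) = twistedComp q₂ d₁ s₁ s₂ a + twistedComp q₂ d₁ s₁ s₂ b := by
  rw [twistedComp, mul_add, hadd₂, hadd₁]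
  rfl

theorem twistedComp_pow_mul (hsemi₁ : ∀ a b, s₁ (a ^ q₁ * b) = a * s₁ b)
    (hsemi₂ : ∀ a b, s₂ (a ^ q₂ * b) = a * s₂ b) (a b : R) :
    twistedComp q₂ d₁ s₁ s₂ (a ^ (q₁ * q₂) * b) = a * twistedComp q₂ d₁ s₁ s₂ b := by
  have h : d₁ ^ (q₂ - 1) * (a ^ (q₁ * q₂) * b) = (a ^ q₁) ^ q₂ * (d₁ ^ (q₂ - 1) * b) := by
    rw [← pow_mul]
    ring
  rw [twistedComp, h, hsemi₂, hsemi₁]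
  rfl

theorem twistedComp_mul_left (hq₂ : 1 ≤ q₂) (hsemi₂ : ∀ a b, s₂ (a ^ q₂ * b) = a * s₂ b)
    (b : R) : twistedComp q₂ d₁ s₁ s₂ (d₁ * b) = s₁ (d₁ * s₂ b) := by
  rw [twistedComp, ← mul_assoc, ← pow_succ, Nat.sub_add_cancel hq₂, hsemi₂]

theorem twistedComp_mem {I : Ideal R} (hcomp₁ : ∀ a ∈ I, s₁ a ∈ I)
    (hcomp₂ : ∀ a ∈ I, s₂ a ∈ I) {a : R} (ha : a ∈ I) : twistedComp q₂ d₁ s₁ s₂ a ∈ I :=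
  hcomp₁ _ (hcomp₂ _ (I.mul_mem_left _ ha))

end FrobeniusSplitting

open FrobeniusSplitting

theorem stmt_6_general (p e₁ e₂ : ℕ) (hp : p.Prime) (R : Type*) [CommRing R]
    (d₁ d₂ : R)
    (I : Ideal R) (s₁ s₂ : R → R)
    (hadd₁ : ∀ a b : R, s₁ (a + b) = s₁ a + s₁ b)
    (hsemi₁ : ∀ a b : R, s₁ (a ^ p ^ e₁ * b) = a * s₁ b)
    (hcan₁ : s₁ d₁ = 1)
    (hsupp₁ : ∀ P ∈ I.minimalPrimes, d₁ ∉ P)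
    (hcomp₁ : ∀ a ∈ I, s₁ a ∈ I)
    (hadd₂ : ∀ a b : R, s₂ (a + b) = s₂ a + s₂ b)
    (hsemi₂ : ∀ a b : R, s₂ (a ^ p ^ e₂ * b) = a * s₂ b)
    (hcan₂ : s₂ d₂ = 1)
    (hsupp₂ : ∀ P ∈ I.minimalPrimes, d₂ ∉ P)
    (hcomp₂ : ∀ a ∈ I, s₂ a ∈ I) :
    ∃ s : R → R, (∀ a b : R, s (a + b) = s a + s b) ∧
      (∀ a b : R, s (a ^ p ^ (e₁ + e₂) * b) = a * s b) ∧
      s (d₁ * d₂) = 1 ∧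
      (∀ P ∈ I.minimalPrimes, d₁ * d₂ ∉ P) ∧
      (∀ a ∈ I, s a ∈ I) := by
  refine ⟨twistedComp (p ^ e₂) d₁ s₁ s₂, twistedComp_add hadd₁ hadd₂, ?_, ?_,
    fun P hP => hP.1.1.mul_notMem (hsupp₁ P hP) (hsupp₂ P hP),
    fun a ha => twistedComp_mem hcomp₁ hcomp₂ ha⟩
  · intro a b
    rw [pow_add]
    exact twistedComp_pow_mul hsemi₁ hsemi₂ a b
  · rw [twistedComp_mul_left (Nat.one_le_pow _ _ hp.pos) hsemi₂, hcan₂, mul_one,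
    hcan₁]

/-- (Affine model: an effective Cartier divisor `Dᵢ` on
`X = Spec R` is given by a regular element `dᵢ ∈ R`, a stable Frobenius
splitting of `X` along `Dᵢ` of degree `eᵢ` is an additive, `p^{eᵢ}`-semilinear
map `sᵢ : R → R` with `sᵢ(dᵢ) = 1`, and `sᵢ` compatibly splits the closed
subscheme `Y` with ideal `I` if no irreducible component of `Y` lies in the
support of `Dᵢ` — i.e. `dᵢ` avoids every minimal prime over `I` — and
`sᵢ(I) ⊆ I` under the trivialization of `O_X(Dᵢ)` by `dᵢ`.)

If `s₁` (resp. `s₂`) is a stable Frobenius splitting of `X` along `D₁`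
(resp. `D₂`) of degree `e₁` (resp. `e₂`), each compatibly splitting the closed
subscheme `Y`, then there exists a stable Frobenius splitting of `X` along
`D₁ + D₂` (given by `d₁ ⬝ d₂`) of degree `e₁ + e₂` compatibly splitting `Y`. -/
theorem stmt_6 (p e₁ e₂ : ℕ) (hp : p.Prime) (R : Type*) [CommRing R] [CharP R p]
    (d₁ d₂ : R) (hd₁ : d₁ ∈ nonZeroDivisors R) (hd₂ : d₂ ∈ nonZeroDivisors R)
    (I : Ideal R) (s₁ s₂ : R → R)
    (hadd₁ : ∀ a b : R, s₁ (a + b) = s₁ a + s₁ b)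
    (hsemi₁ : ∀ a b : R, s₁ (a ^ p ^ e₁ * b) = a * s₁ b)
    (hcan₁ : s₁ d₁ = 1)
    (hsupp₁ : ∀ P ∈ I.minimalPrimes, d₁ ∉ P)
    (hcomp₁ : ∀ a ∈ I, s₁ a ∈ I)
    (hadd₂ : ∀ a b : R, s₂ (a + b) = s₂ a + s₂ b)
    (hsemi₂ : ∀ a b : R, s₂ (a ^ p ^ e₂ * b) = a * s₂ b)
    (hcan₂ : s₂ d₂ = 1)
    (hsupp₂ : ∀ P ∈ I.minimalPrimes, d₂ ∉ P)
    (hcomp₂ : ∀ a ∈ I, s₂ a ∈ I) :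
    ∃ s : R → R, (∀ a b : R, s (a + b) = s a + s b) ∧
      (∀ a b : R, s (a ^ p ^ (e₁ + e₂) * b) = a * s b) ∧
      s (d₁ * d₂) = 1 ∧
      (∀ P ∈ I.minimalPrimes, d₁ * d₂ ∉ P) ∧
      (∀ a ∈ I, s a ∈ I) :=
  stmt_6_general p e₁ e₂ hp R d₁ d₂ I s₁ s₂ hadd₁ hsemi₁ hcan₁ hsupp₁ hcomp₁ hadd₂ hsemi₂ hcan₂
    hsupp₂ hcomp₂
end

section
/- Let X be a scheme, D and D' effective Cartier divisors, and s a stable Frobenius splitting of X along (p−1)D + D' of degree 1. Then there exists a stable Frobenius splitting of X along D' of degree 1 which compatibly splits the closed subscheme of X defined by D. -/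
/-!
Twisting `s` by `d ^ (p - 1)` gives `s' a = s (d ^ (p - 1) * a)`, a `p`-semilinear map with
`s' d' = 1`; it maps `(d)` into itself because `d ^ (p - 1) * (d * c) = d ^ p * c`.
If `d'` lay in a minimal prime `P` over `(d)`, localizing at `P` would give `u ∉ P` with
`u * d' ^ n ∈ (d)`. Applying `s'` to `u ^ p * d' ^ (p * n + 1)` lowers `n` by one while staying
in `(d)`, so eventually `u ∈ (d) ⊆ P`, a contradiction.
-/

theorem Ideal.exists_mul_pow_mem_of_mem_minimalPrimes {R : Type*} [CommSemiring R]
    {I P : Ideal R} (hP : P ∈ I.minimalPrimes) {x : R} (hx : x ∈ P) :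
    ∃ u ∉ P, ∃ n : ℕ, u * x ^ n ∈ I := by
  have : P.IsPrime := hP.1.1
  have hrad : algebraMap R (Localization.AtPrime P) x ∈ (I.map (algebraMap R _)).radical := by
    rw [IsLocalization.AtPrime.radical_map_of_mem_minimalPrimes _ P I hP]
    exact Ideal.mem_map_of_mem _ hx
  obtain ⟨n, hn⟩ := hrad
  rw [← map_pow, IsLocalization.algebraMap_mem_map_algebraMap_iff P.primeCompl] at hn
  obtain ⟨u, hu, hux⟩ := hn
  exact ⟨u, hu, n, hux⟩

section FrobeniusSemilinear

variable {R : Type*} [CommSemiring R] {p : ℕ} {φ : R → R}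

theorem semilinear_comp_mul_left (hφ : ∀ a b : R, φ (a ^ p * b) = a * φ b) (c : R) :
    ∀ a b : R, φ (c * (a ^ p * b)) = a * φ (c * b) := fun a b => by
  rw [mul_left_comm, hφ]

theorem comp_pow_pred_mul_mem_span_singleton (hp : 0 < p)
    (hφ : ∀ a b : R, φ (a ^ p * b) = a * φ b) {d a : R} (ha : a ∈ Ideal.span {d}) :
    φ (d ^ (p - 1) * a) ∈ Ideal.span {d} := by
  obtain ⟨c, rfl⟩ := Ideal.mem_span_singleton'.mp ha
  have hpow : d ^ (p - 1) * (c * d) = d ^ p * c := by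
    rw [mul_left_comm, ← pow_succ, Nat.sub_add_cancel hp, mul_comm]
  rw [hpow, hφ]
  exact Ideal.mul_mem_right _ _ (Ideal.mem_span_singleton_self d)

theorem mem_of_mul_pow_mem_of_compatible (hp : 0 < p)
    (hφ : ∀ a b : R, φ (a ^ p * b) = a * φ b) {f : R} (hf : φ f = 1) {I : Ideal R}
    (hI : ∀ a ∈ I, φ a ∈ I) {u : R} : ∀ {n : ℕ}, u * f ^ n ∈ I → u ∈ I
  | 0, h => by simpa using h
  | n + 1, h => by
    refine mem_of_mul_pow_mem_of_compatible hp hφ hf hI (n := n) ?_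
    have hdescent : φ (u ^ (p - 1) * f ^ ((p - 1) * n) * (u * f ^ (n + 1))) = u * f ^ n := by
      have hexp : u ^ (p - 1) * f ^ ((p - 1) * n) * (u * f ^ (n + 1)) = (u * f ^ n) ^ p * f := by
        obtain ⟨q, rfl⟩ := Nat.exists_eq_add_of_lt hp
        simp only [zero_add, Nat.add_sub_cancel, mul_pow, ← pow_mul]
        ring
      rw [hexp, hφ, hf, mul_one]
    exact hdescent ▸ hI _ (I.mul_mem_left _ h)

theorem notMem_of_mem_minimalPrimes_of_compatible (hp : 0 < p)
    (hφ : ∀ a b : R, φ (a ^ p * b) = a * φ b) {f : R} (hf : φ f = 1)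
    {I P : Ideal R} (hI : ∀ a ∈ I, φ a ∈ I) (hP : P ∈ I.minimalPrimes) : f ∉ P := fun hfP => by
  obtain ⟨u, hu, n, hun⟩ := Ideal.exists_mul_pow_mem_of_mem_minimalPrimes hP hfP
  exact hu (hP.1.2 (mem_of_mul_pow_mem_of_compatible hp hφ hf hI hun))

end FrobeniusSemilinear

theorem stmt_7_general (p : ℕ) (hp : p.Prime) (R : Type*) [CommRing R]
    (d d' : R)
    (s : R → R)
    (hadd : ∀ a b : R, s (a + b) = s a + s b)
    (hsemi : ∀ a b : R, s (a ^ p * b) = a * s b)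
    (hcan : s (d ^ (p - 1) * d') = 1) :
    ∃ s' : R → R, (∀ a b : R, s' (a + b) = s' a + s' b) ∧
      (∀ a b : R, s' (a ^ p * b) = a * s' b) ∧
      s' d' = 1 ∧
      (∀ P ∈ (Ideal.span {d}).minimalPrimes, d' ∉ P) ∧
      (∀ a ∈ Ideal.span ({d} : Set R), s' a ∈ Ideal.span ({d} : Set R)) := by
  set s' : R → R := fun a => s (d ^ (p - 1) * a)
  have hsemi' : ∀ a b : R, s' (a ^ p * b) = a * s' b := semilinear_comp_mul_left hsemi _
  have hcompat : ∀ a ∈ Ideal.span ({d} : Set R), s' a ∈ Ideal.span {d} :=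
    fun _ ha => comp_pow_pred_mul_mem_span_singleton hp.pos hsemi ha
  refine ⟨s', fun a b => by simp only [s', mul_add, hadd], hsemi', hcan,
    fun P hP => notMem_of_mem_minimalPrimes_of_compatible hp.pos hsemi' hcan hcompat hP, hcompat⟩

/-- (Affine model: effective Cartier divisors `D`, `D'` on
`X = Spec R` are given by regular elements `d`, `d' ∈ R`; the divisor
`(p−1)D + D'` corresponds to `d^(p−1) ⬝ d'`; a stable Frobenius splitting of `X`
along an effective Cartier divisor `E` of degree `1` is an additive,
`p`-semilinear map `s : R → R` sending the canonical section of `E` to `1`.)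

If `s` is a stable Frobenius splitting of `X` along `(p−1)D + D'` of degree `1`,
then there exists a stable Frobenius splitting of `X` along `D'` of degree `1`
which compatibly splits the closed subscheme of `X` defined by `D`, i.e. the
subscheme with ideal `(d)`: no component of that subscheme lies in the support
of `D'` and the splitting maps the ideal `(d)` into itself. -/
theorem stmt_7 (p : ℕ) (hp : p.Prime) (R : Type*) [CommRing R] [CharP R p]
    (d d' : R) (hd : d ∈ nonZeroDivisors R) (hd' : d' ∈ nonZeroDivisors R)
    (s : R → R)
    (hadd : ∀ a b : R, s (a + b) = s a + s b)
    (hsemi : ∀ a b : R, s (a ^ p * b) = a * s b)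
    (hcan : s (d ^ (p - 1) * d') = 1) :
    ∃ s' : R → R, (∀ a b : R, s' (a + b) = s' a + s' b) ∧
      (∀ a b : R, s' (a ^ p * b) = a * s' b) ∧
      s' d' = 1 ∧
      (∀ P ∈ (Ideal.span {d}).minimalPrimes, d' ∉ P) ∧
      (∀ a ∈ Ideal.span ({d} : Set R), s' a ∈ Ideal.span ({d} : Set R)) :=
  stmt_7_general p hp R d d' s hadd hsemi hcan
end

section
/- Let f : X → X' be a proper morphism of schemes with O_{X'} → f_* O_X an isomorphism. Then every Frobenius splitting s of X induces, by applying f_*, a Frobenius splitting of X'; moreover, if Y is a closed subscheme of X compatibly split by s, then the scheme-theoretic image f(Y) is compatibly split by the induced splitting of X'. -/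
open AlgebraicGeometry CategoryTheory Opposite

/-- Let `f : X → X'` be a proper morphism of schemes (of
finite type over an algebraically closed field of characteristic `p > 0`) such
that `O_{X'} → f_* O_X` is an isomorphism (section-wise: every
`f^♯ : Γ(X', U) → Γ(X, f⁻¹U)` is bijective).  Then every Frobenius splitting
`s` of `X` induces, by applying `f_*`, a Frobenius splitting `s'` of `X'`
(characterized by `f^♯ ∘ s' = s ∘ f^♯`); moreover, if `Y` is a closed subscheme
of `X` compatibly split by `s`, then the scheme-theoretic image `f(Y)` — the
closed subscheme of `X'` with ideal sheaf `U ↦ (f^♯)⁻¹(I_Y(f⁻¹U))` — is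
compatibly split by the induced splitting `s'`. -/
theorem stmt_9 (k : Type) [Field k] [IsAlgClosed k] (p : ℕ) (hp : p.Prime)
    [CharP k p] (X X' : AlgebraicGeometry.Scheme) (f : X ⟶ X')
    [AlgebraicGeometry.IsProper f]
    (hiso : ∀ U : X'.Opens, Function.Bijective (f.app U))
    (s : SchemeFrobSplitting X p) (I : SchemeIdealSheaf X)
    (hcompat : ∀ (U : X.Opens), ∀ a ∈ I.ideal U, s.s U a ∈ I.ideal U) :
    ∃ s' : SchemeFrobSplitting X' p,
      (∀ (U : X'.Opens) (a : Γ(X', U)),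
        f.app U (s'.s U a) = s.s (f ⁻¹ᵁ U) (f.app U a)) ∧
      (∀ (U : X'.Opens) (a : Γ(X', U)),
        f.app U a ∈ I.ideal (f ⁻¹ᵁ U) → f.app U (s'.s U a) ∈ I.ideal (f ⁻¹ᵁ U)) := by
    classical
  set e : ∀ U : X'.Opens, Γ(X', U) ≃ Γ(X, f ⁻¹ᵁ U) :=
    fun U => Equiv.ofBijective _ (hiso U) with he
  have happ : ∀ (U : X'.Opens) (x : Γ(X, f ⁻¹ᵁ U)), f.app U ((e U).symm x) = x :=
    fun U x => (e U).apply_symm_apply x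
  have hnat : ∀ {U V : X'.Opens} (h : V ≤ U) (a : Γ(X', U)),
      f.app V (X'.presheaf.map (homOfLE h).op a)
        = X.presheaf.map (homOfLE (f.preimage_mono h : f ⁻¹ᵁ V ≤ f ⁻¹ᵁ U)).op (f.app U a) := by
    intro U V h a
    have := congrArg (fun g => g a) (f.naturality (homOfLE h).op)
    exact this
  refine ⟨⟨fun U a => (e U).symm (s.s (f ⁻¹ᵁ U) (f.app U a)), ?_, ?_, ?_, ?_⟩, ?_, ?_⟩
  · intro U a b
    apply (hiso U).1
    simp [happ, map_add, s.map_add]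
  · intro U a b
    apply (hiso U).1
    simp [happ, map_mul, map_pow, s.semilinear]
  · intro U a
    apply (hiso U).1
    simp [happ, map_pow, s.splits]
  · intro U V h a
    apply (hiso V).1
    rw [happ, hnat, happ, s.res, hnat]
  · intro U a
    simp [happ]
  · intro U a ha
    simpa [happ] using hcompat _ _ ha
end
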